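/- Let (Ω, μ) be a probability space, let Θ : Ω → ℝⁿ have square-integrable components, let d : Ω → {0,1} satisfy μ({d = 1}) = p, and let ω : Ω → ℝ be square-integrable with E[ω] = 0 and E[ω²] = σ², where Θ, d and ω are mutually independent. Let Ā₀, Ā₁ be real n×n matrices and B̄ ∈ ℝⁿ, and define Θ′ : Ω → ℝⁿ by Θ′ = Ā₁Θ + B̄ω on {d = 1} and Θ′ = Ā₀Θ + B̄ω on {d = 0}. Then the second-moment matrix satisfies E[Θ′Θ′ᵀ] = 𝓐 E[ΘΘᵀ] 𝓐ᵀ + p(1−p) Ã E[ΘΘᵀ] Ãᵀ + σ² B̄B̄ᵀ, where 𝓐 = pĀ₁ + (1−p)Ā₀ and Ã = Ā₁ − Ā₀. -/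

import Mathlib

/-!
On `{d = 1}` the new state is `Ā₁Θ` and on `{d = 0}` it is `Ā₀Θ`. Since `Θ` is independent of `d`,
the second moment of `Θ` restricted to either event is the probability of the event times
`Σ = E[ΘΘᵀ]`, so the switched part contributes `p Ā₁ΣĀ₁ᵀ + (1 - p) Ā₀ΣĀ₀ᵀ`; expanding
`𝓐 = Ā₀ + pÃ` turns this into `𝓐Σ𝓐ᵀ + p(1 - p) ÃΣÃᵀ`. The noise adds only `σ²B̄B̄ᵀ`: its cross
terms with `Ā(d)Θ` vanish because `ω` has mean zero and is independent of `(Θ, d)`.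
-/

open MeasureTheory ProbabilityTheory Matrix

section SecondMoment

variable {Ω ι κ : Type*} [MeasurableSpace Ω] {μ : Measure Ω}

noncomputable def secondMoment (μ : Measure Ω) (X : Ω → ι → ℝ) : Matrix ι ι ℝ :=
  of fun i j => ∫ a, X a i * X a j ∂μ

theorem memLp_mulVec_apply [Fintype ι] {p : ENNReal} (M : Matrix κ ι ℝ) {X : Ω → ι → ℝ}
    (hX : ∀ i, MemLp (fun a => X a i) p μ) (k : κ) :
    MemLp (fun a => (M *ᵥ X a) k) p μ :=
  memLp_finsetSum _ fun i _ => (hX i).const_mul (M k i)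

theorem secondMoment_mulVec [Fintype ι] (M : Matrix κ ι ℝ) {X : Ω → ι → ℝ}
    (hX : ∀ i j, Integrable (fun a => X a i * X a j) μ) :
    secondMoment μ (fun a => M *ᵥ X a) = M * secondMoment μ X * Mᵀ := by
  ext k l
  have hexpand : ∀ a, (M *ᵥ X a) k * (M *ᵥ X a) l =
      ∑ i, ∑ j, M k i * M l j * (X a i * X a j) := by
    intro a
    simp only [mulVec, dotProduct, Finset.sum_mul_sum]
    exact Finset.sum_congr rfl fun i _ => Finset.sum_congr rfl fun j _ => by ring
  simp only [secondMoment, of_apply, hexpand, mul_apply, transpose_apply]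
  rw [integral_finsetSum _ fun i _ => integrable_finsetSum _ fun j _ => (hX i j).const_mul _]
  simp_rw [integral_finsetSum _ fun j _ => (hX _ j).const_mul _, integral_const_mul,
    Finset.sum_mul]
  rw [Finset.sum_comm]
  exact Finset.sum_congr rfl fun i _ => Finset.sum_congr rfl fun j _ => by ring

theorem secondMoment_piecewise {s : Set Ω} [DecidablePred (· ∈ s)] (hs : MeasurableSet s)
    {X Y : Ω → ι → ℝ} (hX : ∀ i j, IntegrableOn (fun a => X a i * X a j) s μ)
    (hY : ∀ i j, IntegrableOn (fun a => Y a i * Y a j) sᶜ μ) :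
    secondMoment μ (s.piecewise X Y) =
      secondMoment (μ.restrict s) X + secondMoment (μ.restrict sᶜ) Y := by
  ext i j
  have hsplit : (fun a => s.piecewise X Y a i * s.piecewise X Y a j) =
      s.piecewise (fun a => X a i * X a j) (fun a => Y a i * Y a j) := by
    ext a
    by_cases ha : a ∈ s <;> simp [ha]
  simp only [secondMoment, Matrix.add_apply, of_apply]
  rw [hsplit, integral_piecewise hs (hX i j) (hY i j)]

theorem secondMoment_restrict_preimage_of_indepFun {β : Type*} [MeasurableSpace β]
    {X : Ω → ι → ℝ} {d : Ω → β} (hX : AEMeasurable X μ) (hd : Measurable d)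
    (hXd : IndepFun X d μ) {t : Set β} (ht : MeasurableSet t) :
    secondMoment (μ.restrict (d ⁻¹' t)) X = μ.real (d ⁻¹' t) • secondMoment μ X := by
  ext i j
  exact Indep.setIntegral_eq_mul hd.comap_le hXd.symm hX ⟨t, ht, rfl⟩
    ((measurable_pi_apply i).mul (measurable_pi_apply j)).aestronglyMeasurable

theorem secondMoment_add_smul {Y : Ω → ι → ℝ} {w : Ω → ℝ} (b : ι → ℝ)
    (hY : ∀ i, MemLp (fun a => Y a i) 2 μ) (hw : MemLp w 2 μ)
    (hYw : ∀ i, ∫ a, Y a i * w a ∂μ = 0) :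
    secondMoment μ (fun a => Y a + w a • b) =
      secondMoment μ Y + (∫ a, w a ^ 2 ∂μ) • vecMulVec b b := by
  ext i j
  have hexpand : ∀ a, (Y a + w a • b) i * (Y a + w a • b) j =
      Y a i * Y a j + (Y a i * w a * b j + Y a j * w a * b i) + w a ^ 2 * (b i * b j) := by
    intro a
    simp only [Pi.add_apply, Pi.smul_apply, smul_eq_mul]
    ring
  have hYY : Integrable (fun a => Y a i * Y a j) μ := (hY i).integrable_mul (hY j)
  have hYwi : Integrable (fun a => Y a i * w a * b j) μ :=
    ((hY i).integrable_mul hw).mul_const _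
  have hYwj : Integrable (fun a => Y a j * w a * b i) μ :=
    ((hY j).integrable_mul hw).mul_const _
  have hww : Integrable (fun a => w a ^ 2 * (b i * b j)) μ := hw.integrable_sq.mul_const _
  simp only [secondMoment, Matrix.add_apply, Matrix.smul_apply, of_apply, vecMulVec_apply,
    smul_eq_mul, hexpand]
  rw [integral_add ?_ hww, integral_add hYY ?_, integral_add hYwi hYwj, integral_mul_const,
    integral_mul_const, integral_mul_const, hYw i, hYw j]
  · ring
  · exact hYwi.add hYwj
  · exact hYY.add (hYwi.add hYwj)

end SecondMoment

theorem integral_comp_mul_eq_zero_of_indepFun {Ω β : Type*} [MeasurableSpace Ω]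
    [MeasurableSpace β] {μ : Measure Ω} {V : Ω → β} {w : Ω → ℝ} {g : β → ℝ}
    (hVw : IndepFun V w μ) (hV : AEMeasurable V μ) (hg : Measurable g)
    (hw : AEStronglyMeasurable w μ) (hw0 : ∫ a, w a ∂μ = 0) :
    ∫ a, g (V a) * w a ∂μ = 0 :=
  ((hVw.comp hg measurable_id).integral_fun_mul_eq_mul_integral
    (hg.comp_aemeasurable hV).aestronglyMeasurable hw).trans (by simp [hw0])

theorem smul_mul_mul_transpose_add_one_sub_smul {R m n : Type*} [CommRing R] [Fintype n] (p : R)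
    (A0 A1 : Matrix m n R) (S : Matrix n n R) :
    p • (A1 * S * A1ᵀ) + (1 - p) • (A0 * S * A0ᵀ) =
      (p • A1 + (1 - p) • A0) * S * (p • A1 + (1 - p) • A0)ᵀ +
        (p * (1 - p)) • ((A1 - A0) * S * (A1 - A0)ᵀ) := by
  simp only [transpose_add, transpose_smul, transpose_sub, Matrix.add_mul, Matrix.mul_add,
    Matrix.sub_mul, Matrix.mul_sub, Matrix.smul_mul, Matrix.mul_smul]
  module

theorem ite_mulVec_eq_piecewise {Ω R ι κ : Type*} [NonUnitalNonAssocSemiring R] [Fintype ι]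
    (A0 A1 : Matrix κ ι R) (X : Ω → ι → R) (d : Ω → Bool) :
    (fun a => (if d a then A1 else A0) *ᵥ X a) =
      {a | d a = true}.piecewise (fun a => A1 *ᵥ X a) (fun a => A0 *ᵥ X a) := by
  ext a : 1
  cases h : d a <;> simp [h]

theorem measurable_ite_mulVec_apply {ι κ : Type*} [Fintype ι] (A0 A1 : Matrix κ ι ℝ) (k : κ) :
    Measurable fun q : (ι → ℝ) × Bool => ((if q.2 then A1 else A0) *ᵥ q.1) k := by
  have hlin : ∀ M : Matrix κ ι ℝ, Measurable fun v => (M *ᵥ v) k := fun M =>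
    ((continuous_apply k).comp (continuous_const.matrix_mulVec continuous_id)).measurable
  exact measurable_from_prod_countable_left fun b => hlin (if b then A1 else A0)

section Switched

variable {Ω ι κ : Type*} [Fintype ι] [MeasurableSpace Ω] {μ : Measure Ω}
  {X : Ω → ι → ℝ} {d : Ω → Bool}

theorem memLp_ite_mulVec_apply {p : ENNReal} (A0 A1 : Matrix κ ι ℝ) (hd : Measurable d)
    (hX : ∀ i, MemLp (fun a => X a i) p μ) (k : κ) :
    MemLp (fun a => ((if d a then A1 else A0) *ᵥ X a) k) p μ := by
  have hs : MeasurableSet {a | d a = true} := hd (measurableSet_singleton true)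
  have hpiece := ((memLp_mulVec_apply A1 hX k).restrict _).piecewise hs
    ((memLp_mulVec_apply A0 hX k).restrict _)
  convert hpiece using 1
  ext a
  cases ha : d a <;> simp [ha]

theorem secondMoment_ite_mulVec [IsProbabilityMeasure μ] (A0 A1 : Matrix κ ι ℝ)
    (hd : Measurable d) (hX2 : ∀ i, MemLp (fun a => X a i) 2 μ)
    (hXd : IndepFun X d μ) :
    secondMoment μ (fun a => (if d a then A1 else A0) *ᵥ X a) =
      μ.real {a | d a = true} • (A1 * secondMoment μ X * A1ᵀ) +
        (1 - μ.real {a | d a = true}) • (A0 * secondMoment μ X * A0ᵀ) := by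
  have hs : MeasurableSet {a | d a = true} := hd (measurableSet_singleton true)
  have hXX : ∀ i j, Integrable (fun a => X a i * X a j) μ :=
    fun i j => (hX2 i).integrable_mul (hX2 j)
  have hMX : ∀ (M : Matrix κ ι ℝ) k l, Integrable (fun a => (M *ᵥ X a) k * (M *ᵥ X a) l) μ :=
    fun M k l => (memLp_mulVec_apply M hX2 k).integrable_mul (memLp_mulVec_apply M hX2 l)
  have hrestrict : ∀ t, MeasurableSet t →
      secondMoment (μ.restrict (d ⁻¹' t)) X = μ.real (d ⁻¹' t) • secondMoment μ X :=
    fun t ht => secondMoment_restrict_preimage_of_indepFun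
      (aemeasurable_pi_lambda X fun i => (hX2 i).aestronglyMeasurable.aemeasurable) hd hXd ht
  have htrue : secondMoment (μ.restrict {a | d a = true}) X =
      μ.real {a | d a = true} • secondMoment μ X :=
    hrestrict {true} (measurableSet_singleton true)
  have hfalse : secondMoment (μ.restrict {a | d a = true}ᶜ) X =
      (1 - μ.real {a | d a = true}) • secondMoment μ X := by
    rw [← probReal_compl_eq_one_sub hs]
    exact hrestrict {true}ᶜ (measurableSet_singleton true).compl
  rw [ite_mulVec_eq_piecewise, secondMoment_piecewise hs (fun k l => (hMX A1 k l).integrableOn)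
    (fun k l => (hMX A0 k l).integrableOn), secondMoment_mulVec _ fun i j => (hXX i j).restrict,
    secondMoment_mulVec _ fun i j => (hXX i j).restrict, htrue, hfalse]
  simp only [Matrix.mul_smul, Matrix.smul_mul]

end Switched

theorem second_moment_recursion_general {Ω : Type*} [MeasurableSpace Ω]
    (μ : Measure Ω) [IsProbabilityMeasure μ]
    {n : ℕ} (Θ : Ω → Fin n → ℝ) (d : Ω → Bool) (ω : Ω → ℝ) (p σ2 : ℝ)
    (A0 A1 : Matrix (Fin n) (Fin n) ℝ) (B : Fin n → ℝ)
    (hdmeas : Measurable d)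
    (hΘL2 : ∀ i, MemLp (fun a => Θ a i) 2 μ)
    (hωL2 : MemLp ω 2 μ)
    (hd : (μ {a | d a = true}).toReal = p)
    (hωmean : ∫ a, ω a ∂μ = 0)
    (hωvar : ∫ a, (ω a) ^ 2 ∂μ = σ2)
    (hΘd : IndepFun Θ d μ)
    (hΘdω : IndepFun (fun a => (Θ a, d a)) ω μ)
    (Θ' : Ω → Fin n → ℝ)
    (hΘ' : ∀ a, Θ' a = (if d a then A1 else A0).mulVec (Θ a) + ω a • B) :
    (Matrix.of fun i j => ∫ a, Θ' a i * Θ' a j ∂μ) =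
      (p • A1 + (1 - p) • A0) * (Matrix.of fun i j => ∫ a, Θ a i * Θ a j ∂μ) *
          (p • A1 + (1 - p) • A0)ᵀ +
        (p * (1 - p)) • ((A1 - A0) *
          (Matrix.of fun i j => ∫ a, Θ a i * Θ a j ∂μ) * (A1 - A0)ᵀ) +
        σ2 • vecMulVec B B := by
  have hΘ : AEMeasurable Θ μ :=
    aemeasurable_pi_lambda Θ fun i => (hΘL2 i).aestronglyMeasurable.aemeasurable
  have hnoise : ∀ i, ∫ a, ((if d a then A1 else A0) *ᵥ Θ a) i * ω a ∂μ = 0 := fun i =>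
    integral_comp_mul_eq_zero_of_indepFun (V := fun a => (Θ a, d a)) hΘdω
      (hΘ.prodMk hdmeas.aemeasurable) (measurable_ite_mulVec_apply A0 A1 i)
      hωL2.aestronglyMeasurable hωmean
  have hp : μ.real {a | d a = true} = p := hd
  show secondMoment μ Θ' =
    _ * secondMoment μ Θ * _ + _ • (_ * secondMoment μ Θ * _) + _
  rw [funext hΘ', secondMoment_add_smul B (memLp_ite_mulVec_apply A0 A1 hdmeas hΘL2) hωL2 hnoise,
    secondMoment_ite_mulVec A0 A1 hdmeas hΘL2 hΘd, hp, hωvar,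
    smul_mul_mul_transpose_add_one_sub_smul]

/-- One-step second-moment recursion for the jump-linear system
`Θ′ = Ā(d)Θ + B̄ω` with a Bernoulli(p) dropout `d` and zero-mean noise `ω`
of variance `σ²`, where `Θ`, `d`, `ω` are mutually independent:
`E[Θ′Θ′ᵀ] = 𝓐 E[ΘΘᵀ] 𝓐ᵀ + p(1−p) Ã E[ΘΘᵀ] Ãᵀ + σ² B̄B̄ᵀ` with
`𝓐 = pĀ₁ + (1−p)Ā₀` and `Ã = Ā₁ − Ā₀`. -/
theorem second_moment_recursion {Ω : Type*} [MeasurableSpace Ω]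
    (μ : Measure Ω) [IsProbabilityMeasure μ]
    {n : ℕ} (Θ : Ω → Fin n → ℝ) (d : Ω → Bool) (ω : Ω → ℝ) (p σ2 : ℝ)
    (A0 A1 : Matrix (Fin n) (Fin n) ℝ) (B : Fin n → ℝ)
    (hΘmeas : Measurable Θ) (hdmeas : Measurable d) (hωmeas : Measurable ω)
    (hΘL2 : ∀ i, MemLp (fun a => Θ a i) 2 μ)
    (hωL2 : MemLp ω 2 μ)
    (hd : (μ {a | d a = true}).toReal = p)
    (hωmean : ∫ a, ω a ∂μ = 0)
    (hωvar : ∫ a, (ω a) ^ 2 ∂μ = σ2)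
    (hΘd : IndepFun Θ d μ)
    (hΘdω : IndepFun (fun a => (Θ a, d a)) ω μ)
    (Θ' : Ω → Fin n → ℝ)
    (hΘ' : ∀ a, Θ' a = (if d a then A1 else A0).mulVec (Θ a) + ω a • B) :
    (Matrix.of fun i j => ∫ a, Θ' a i * Θ' a j ∂μ) =
      (p • A1 + (1 - p) • A0) * (Matrix.of fun i j => ∫ a, Θ a i * Θ a j ∂μ) *
          (p • A1 + (1 - p) • A0)ᵀ +
        (p * (1 - p)) • ((A1 - A0) *
          (Matrix.of fun i j => ∫ a, Θ a i * Θ a j ∂μ) * (A1 - A0)ᵀ) +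
        σ2 • vecMulVec B B :=
  second_moment_recursion_general μ Θ d ω p σ2 A0 A1 B hdmeas hΘL2 hωL2 hd hωmean hωvar hΘd hΘdω Θ'
    hΘ'
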